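/- For integers h ≥ 6, let p(h) = ∑_{i=0}^{4h-12} binomial(i+2, 2) · (1/2)^{i+3} (the probability that a winning path of length 4 beats a losing path of length 4h - 10). Then for every positive integer N, real δ ∈ (0,1), and h = ⌈2·log₂ N + log₂(1/δ)⌉ + 5, we have p(h) ≥ 1 - δ/N². -/

import Mathlib

/-
Summing the series in closed form gives `1 - p(h) = (16h² - 68h + 74) / 2^(4h-8)`. Since
`16h² - 68h + 74 ≤ 2^(3h-8)` for `h ≥ 6`, the tail is at most `2^(-h)`, and the choice of `h`
makes `2^h ≥ N²/δ`.
-/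

theorem sum_choose_two_mul_half_pow (n : ℕ) :
    ∑ i ∈ Finset.range n, (((i + 2).choose 2 : ℝ)) * (1 / 2) ^ (i + 3)
      = 1 - ((n : ℝ) ^ 2 + 5 * n + 8) / 2 ^ (n + 3) := by
  induction n with
  | zero => norm_num
  | succ n ih =>
    rw [Finset.sum_range_succ, ih, Nat.cast_choose_two, one_div_pow]
    field_simp
    push_cast
    ring

theorem quadratic_le_two_pow_three_mul_sub_eight {h : ℕ} (hh : 6 ≤ h) :
    16 * (h : ℝ) ^ 2 - 68 * h + 74 ≤ 2 ^ (3 * h - 8) := by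
  induction h, hh using Nat.le_induction with
  | base => norm_num
  | succ h hh ih =>
    have hpow : (2 : ℝ) ^ (3 * (h + 1) - 8) = 8 * 2 ^ (3 * h - 8) := by
      rw [show 3 * (h + 1) - 8 = 3 * h - 8 + 3 by omega, pow_add]
      ring
    have h6 : (6 : ℝ) ≤ h := by exact_mod_cast hh
    rw [hpow]
    push_cast
    nlinarith

theorem one_sub_half_pow_le_sum_choose_two {h : ℕ} (hh : 6 ≤ h) :
    1 - (1 / 2 : ℝ) ^ h
      ≤ ∑ i ∈ Finset.range (4 * h - 11), (((i + 2).choose 2 : ℝ)) * (1 / 2) ^ (i + 3) := by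
  rw [sum_choose_two_mul_half_pow, show 4 * h - 11 + 3 = (3 * h - 8) + h by omega, pow_add,
    Nat.cast_sub (by omega), one_div_pow, sub_le_sub_iff_left,
    div_le_div_iff₀ (by positivity) (by positivity), one_mul]
  gcongr
  push_cast
  linarith [quadratic_le_two_pow_three_mul_sub_eight hh]

theorem stmt18 (N : ℕ) (δ : ℝ) (h : ℕ) (hN : 0 < N) (hδ0 : 0 < δ) (hδ1 : δ < 1)
    (hh : (h : ℤ) = ⌈2 * Real.logb 2 N + Real.logb 2 (1 / δ)⌉ + 5) :
    ∑ i ∈ Finset.range (4 * h - 11), (((i + 2).choose 2 : ℝ)) * (1 / 2) ^ (i + 3)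
      ≥ 1 - δ / (N : ℝ) ^ 2 := by
  have hN0 : (0 : ℝ) < N := by exact_mod_cast hN
  have hlog : Real.logb 2 ((N : ℝ) ^ 2 / δ) = 2 * Real.logb 2 N + Real.logb 2 (1 / δ) := by
    rw [div_eq_mul_one_div, Real.logb_mul (by positivity) (by positivity), Real.logb_pow]
    push_cast
    ring
  have hlog_pos : 0 < Real.logb 2 ((N : ℝ) ^ 2 / δ) := by
    exact Real.logb_pos one_lt_two
      ((one_lt_div hδ0).2 (hδ1.trans_le (one_le_pow₀ (by exact_mod_cast hN))))
  have hlog_le : Real.logb 2 ((N : ℝ) ^ 2 / δ) ≤ h := by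
    have := Int.le_ceil (2 * Real.logb 2 N + Real.logb 2 (1 / δ))
    have hhR : (h : ℝ) = ((⌈2 * Real.logb 2 N + Real.logb 2 (1 / δ)⌉ + 5 : ℤ) : ℝ) := by
      exact_mod_cast hh
    push_cast at hhR
    linarith
  have h6 : 6 ≤ h := by
    have := Int.ceil_pos.2 (hlog ▸ hlog_pos)
    omega
  have hpow : (N : ℝ) ^ 2 / δ ≤ 2 ^ h := by
    rw [← Real.rpow_natCast (2 : ℝ) h]
    exact (Real.logb_le_iff_le_rpow one_lt_two (by positivity)).1 hlog_le
  have htail : (1 / 2 : ℝ) ^ h ≤ δ / (N : ℝ) ^ 2 := by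
    rw [one_div_pow, one_div_le (by positivity) (by positivity), one_div_div]
    exact hpow
  linarith [one_sub_half_pow_le_sum_choose_two h6]
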